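/- arXiv:1902.01438 — 6 statements merged into one kernel-verified Lean document; each statement's English description precedes it below -/
import Mathlib

section
/- Let Γ be a finite simplicial graph with a pre-order ≤ on its vertices defined by u ≤ v if and only if lk(u) ⊆ st(v) (where st(v) = {v} ∪ lk(v)). If X is a ≤-equivalence class containing at least three vertices, then X is either a clique or has no edges: that is, if u, v ∈ X are adjacent and w ∈ X is a third vertex, then w is adjacent to both u and v. -/
variable {V : Type*} [Fintype V]

/-- The star of a vertex: the vertex together with its link (neighbor set). -/
def stS (Γ : SimpleGraph V) (v : V) : Set V := insert v (Γ.neighborSet v)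

/-- The pre-order `u ≤ v` iff `lk(u) ⊆ st(v)`. -/
def leD (Γ : SimpleGraph V) (u v : V) : Prop := Γ.neighborSet u ⊆ stS Γ v

/-- `u` and `v` are equivalent: `u ≤ v` and `v ≤ u`. -/
def equivD (Γ : SimpleGraph V) (u v : V) : Prop := leD Γ u v ∧ leD Γ v u

theorem mem_stS {W : Type*} {Γ : SimpleGraph W} {v x : W} :
    x ∈ stS Γ v ↔ x = v ∨ Γ.Adj v x :=
  Iff.rfl

theorem leD.adj_of_adj {W : Type*} {Γ : SimpleGraph W} {v w x : W} (h : leD Γ v w)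
    (hvx : Γ.Adj v x) (hxw : x ≠ w) : Γ.Adj w x :=
  (mem_stS.mp (h hvx)).resolve_left hxw

/-- If `X` is a `≤`-equivalence class containing at least three vertices, then `X` is either a
clique or has no edges: if `u, v ∈ X` are adjacent and `w ∈ X` is a third vertex, then `w` is
adjacent to both `u` and `v`. -/
theorem equivalence_class_clique_or_edgeless (Γ : SimpleGraph V) (X : Set V)
    (hX : ∀ u ∈ X, ∀ v : V, v ∈ X ↔ equivD Γ u v)
    (u v w : V) (hu : u ∈ X) (hv : v ∈ X) (hw : w ∈ X)
    (hadj : Γ.Adj u v) (hwu : w ≠ u) (hwv : w ≠ v) :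
    Γ.Adj w u ∧ Γ.Adj w v := by
  have hvw : leD Γ v w := ((hX v hv w).mp hw).1
  have huw : leD Γ u w := ((hX u hu w).mp hw).1
  exact ⟨hvw.adj_of_adj hadj.symm hwu.symm, huw.adj_of_adj hadj hwv.symm⟩
end

section
/- Let Γ be a connected finite simplicial graph that is not equal to the star of any vertex, with the pre-order u ≤ v iff lk(u) ⊆ st(v). Then for every vertex v of Γ there exists a vertex w ∈ lk(v) that is maximal with respect to ≤ (i.e., for every z with w ≤ z, also z ≤ w). -/
variable {V : Type*} [Fintype V]

/-!
Connectedness and `Γ ≠ st(v)` give an edge `ab` with `a ∈ st(v)` and `b ∉ st(v)`, so `a ≠ v`.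
Every `z ≥ a` satisfies `v, b ∈ lk(a) ⊆ st(z)`, and `z ≠ v` because `b ∉ st(v)`; hence
`z ∈ lk(v)`. By finiteness some `≤`-maximal vertex lies above `a`, and it is in `lk(v)`.
-/

theorem exists_rel_maximal_of_isPreorder {α : Type*} [Finite α] (r : α → α → Prop)
    [IsPreorder α r] (a : α) : ∃ b, r a b ∧ ∀ z, r b z → r z b := by
  let _ : Preorder α := { le := r, le_refl := refl_of r, le_trans := fun _ _ _ => trans_of r }
  obtain ⟨b, hab, hb⟩ := Finite.exists_le_maximal (p := fun _ : α => True) (a := a) trivial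
  exact ⟨b, hab, fun _ => hb.2 trivial⟩

section

variable {W : Type*} {Γ : SimpleGraph W}

theorem leD_refl (u : W) : leD Γ u u := Set.subset_insert _ _

theorem leD_trans {u v w : W} (huv : leD Γ u v) (hvw : leD Γ v w) : leD Γ u w := by
  intro x hux
  rcases huv hux with rfl | hvx
  · -- here `x = v`, and the case split is on where `u ∈ lk v ⊆ st w` lies
    rcases hvw hux.symm with rfl | hwu
    · exact Or.inr hux
    · rcases huv hwu.symm with rfl | hxw
      · exact Or.inl rfl
      · exact Or.inr hxw.symm
  · exact hvw hvx

instance : IsPreorder W (leD Γ) where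
  refl := leD_refl
  trans _ _ _ := leD_trans

theorem exists_adj_mem_stS_not_mem_stS (hconn : Γ.Connected) {v : W} (hv : stS Γ v ≠ Set.univ) :
    ∃ a b, Γ.Adj a b ∧ a ∈ stS Γ v ∧ b ∉ stS Γ v := by
  obtain ⟨u, hu⟩ := (Set.ne_univ_iff_exists_notMem _).mp hv
  obtain ⟨p⟩ := hconn v u
  obtain ⟨d, -, hd, hd'⟩ := p.exists_boundary_dart _ (Set.mem_insert v _) hu
  exact ⟨d.fst, d.snd, d.adj, hd, hd'⟩

theorem adj_of_leD_of_adj_not_mem_stS {v a b z : W} (ha : a ∈ stS Γ v) (hab : Γ.Adj a b)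
    (hb : b ∉ stS Γ v) (haz : leD Γ a z) : Γ.Adj v z := by
  have hva : Γ.Adj v a := by
    rcases ha with rfl | hva
    · exact absurd (Or.inr hab) hb
    · exact hva
  rcases haz hva.symm with rfl | hzv
  · exact absurd (haz hab) hb
  · exact hzv.symm

end

/-- If `Γ` is connected and not the star of any vertex, then every vertex has a `≤`-maximal
vertex in its link. -/
theorem maximal_vertex_in_link (Γ : SimpleGraph V)
    (hconn : Γ.Connected) (hnostar : ¬ ∃ v : V, stS Γ v = Set.univ) (v : V) :
    ∃ w ∈ Γ.neighborSet v, ∀ z : V, leD Γ w z → leD Γ z w := by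
  obtain ⟨a, b, hab, ha, hb⟩ := exists_adj_mem_stS_not_mem_stS hconn fun h => hnostar ⟨v, h⟩
  obtain ⟨w, haw, hw⟩ := exists_rel_maximal_of_isPreorder (leD Γ) a
  exact ⟨w, adj_of_leD_of_adj_not_mem_stS ha hab hb haw, hw⟩
end

section
/- Let Γ be a connected finite simplicial graph that is not the star of a vertex, with the pre-order u ≤ v iff lk(u) ⊆ st(v). If u, v are non-adjacent vertices with lk(u) ∩ lk(v) nonempty, then lk(u) ∩ lk(v) contains a vertex that is maximal in Γ with respect to ≤. -/
variable {V : Type*} [Fintype V]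

/-!
The common link `lk(u) ∩ lk(v)` of two distinct non-adjacent vertices is an up-set for `≤`:
if `w` lies in it and `w ≤ z`, then `u, v ∈ lk(w) ⊆ st(z)`, and `z` can be neither `u` nor `v`
because `u ∉ st(v)`. A finite nonempty up-set of a preorder contains a maximal element, which is
then maximal in all of `Γ`.
-/

namespace SimpleGraph

variable {W : Type*} {Γ : SimpleGraph W}

lemma leD_refl (u : W) : leD Γ u u := fun _ hx => Or.inr hx

lemma leD_trans {a b c : W} (hab : leD Γ a b) (hbc : leD Γ b c) : leD Γ a c := by
  intro x hax
  rcases hab hax with rfl | hbx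
  · rcases eq_or_ne x c with rfl | hxc
    · exact Or.inl rfl
    rcases hbc hax.symm with rfl | hca
    · exact Or.inr hax
    rcases hab hca.symm with rfl | hxc'
    · exact absurd rfl hxc
    · exact Or.inr hxc'.symm
  · exact hbc hbx

variable (Γ) in
abbrev linkPreorder : Preorder W where
  le := leD Γ
  le_refl := leD_refl
  le_trans _ _ _ := leD_trans

lemma adj_of_mem_stS_of_mem_stS {u v z : W} (hu : u ∈ stS Γ z) (hv : v ∈ stS Γ z)
    (huv : u ≠ v) (hnadj : ¬ Γ.Adj u v) : Γ.Adj z u := by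
  rcases hu with rfl | hzu
  · rcases hv with rfl | hzv
    · exact absurd rfl huv
    · exact absurd hzv hnadj
  · exact hzu

lemma mem_commonLink_of_leD {u v w z : W} (huv : u ≠ v) (hnadj : ¬ Γ.Adj u v)
    (hw : w ∈ Γ.neighborSet u ∩ Γ.neighborSet v) (hwz : leD Γ w z) :
    z ∈ Γ.neighborSet u ∩ Γ.neighborSet v := by
  have hu : u ∈ stS Γ z := hwz hw.1.symm
  have hv : v ∈ stS Γ z := hwz hw.2.symm
  exact ⟨(adj_of_mem_stS_of_mem_stS hu hv huv hnadj).symm,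
    (adj_of_mem_stS_of_mem_stS hv hu huv.symm fun h => hnadj h.symm).symm⟩

end SimpleGraph

theorem maximal_vertex_in_common_link_general (Γ : SimpleGraph V)
    (u v : V) (huv : u ≠ v) (hnadj : ¬ Γ.Adj u v)
    (hne : (Γ.neighborSet u ∩ Γ.neighborSet v).Nonempty) :
    ∃ w ∈ Γ.neighborSet u ∩ Γ.neighborSet v, ∀ z : V, leD Γ w z → leD Γ z w := by
  let := SimpleGraph.linkPreorder Γ
  obtain ⟨w, hw, hmax⟩ := (Set.toFinite _).exists_maximal hne
  exact ⟨w, hw, fun z hwz => hmax (SimpleGraph.mem_commonLink_of_leD huv hnadj hw hwz) hwz⟩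

/-- If `Γ` is connected and not the star of a vertex, and `u, v` are non-adjacent vertices with
`lk(u) ∩ lk(v)` nonempty, then `lk(u) ∩ lk(v)` contains a `≤`-maximal vertex of `Γ`. -/
theorem maximal_vertex_in_common_link (Γ : SimpleGraph V)
    (hconn : Γ.Connected) (hnostar : ¬ ∃ v : V, stS Γ v = Set.univ)
    (u v : V) (huv : u ≠ v) (hnadj : ¬ Γ.Adj u v)
    (hne : (Γ.neighborSet u ∩ Γ.neighborSet v).Nonempty) :
    ∃ w ∈ Γ.neighborSet u ∩ Γ.neighborSet v, ∀ z : V, leD Γ w z → leD Γ z w :=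
  maximal_vertex_in_common_link_general Γ u v huv hnadj hne
end

section
/- Let 𝒢 be a graph product of cyclic groups, x a vertex of infinite order with x ≤ y (so R_x^y exists), and C a union of connected components of Γ \ st(x) with y ∉ C ∪ st(x). Then in Aut(𝒢) the relation R_x^{y^{-1}} π^x_C R_x^y = π^{y^{-1}}_C π^x_C holds, where π^{y^{-1}}_C conjugates each element of C by y^{-1}. -/
variable {V : Type*} [Fintype V]

/-- Relators for the graph product of cyclic groups over the labeled graph `(Γ, o)`:
commutators of adjacent generators, and `v ^ o v` for finite-order vertices
(`o v = 0` means the vertex group is infinite cyclic). -/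
def gpRels (Γ : SimpleGraph V) (o : V → ℕ) : Set (FreeGroup V) :=
  {r | (∃ u v, Γ.Adj u v ∧
          r = FreeGroup.of u * FreeGroup.of v * (FreeGroup.of u)⁻¹ * (FreeGroup.of v)⁻¹) ∨
       ∃ v, o v ≠ 0 ∧ r = FreeGroup.of v ^ (o v)}

/-- The graph product of cyclic groups `ℤ/o(v)` over `(Γ, o)` (`o v = 0` meaning `ℤ`). -/
abbrev GP (Γ : SimpleGraph V) (o : V → ℕ) : Type _ := PresentedGroup (gpRels Γ o)

/-- The generator of the graph product corresponding to a vertex. -/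
def gen (Γ : SimpleGraph V) (o : V → ℕ) (v : V) : GP Γ o := PresentedGroup.of v

/-- `φ` is the transvection `R_u^{v^k} : u ↦ u·v^k`, fixing all other vertex generators. -/
def IsTransv (Γ : SimpleGraph V) (o : V → ℕ) (φ : MulAut (GP Γ o)) (u v : V) (k : ℤ) : Prop :=
  φ (gen Γ o u) = gen Γ o u * gen Γ o v ^ k ∧ ∀ w, w ≠ u → φ (gen Γ o w) = gen Γ o w

/-- `φ` is the partial conjugation `π^v_C`, sending each generator `z ∈ C` to `v z v⁻¹`
and fixing all other vertex generators. -/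
def IsPC (Γ : SimpleGraph V) (o : V → ℕ) (φ : MulAut (GP Γ o)) (v : V) (C : Set V) : Prop :=
  (∀ z ∈ C, φ (gen Γ o z) = gen Γ o v * gen Γ o z * (gen Γ o v)⁻¹) ∧
  ∀ z ∉ C, φ (gen Γ o z) = gen Γ o z

/-- `C` is a union of connected components of `Γ \ st(v)`. -/
def IsUnionComponents (Γ : SimpleGraph V) (v : V) (C : Set V) : Prop :=
  C ∩ stS Γ v = ∅ ∧ ∀ a b, Γ.Adj a b → a ∈ C → b ∉ stS Γ v → b ∈ C

/-! Both sides are automorphisms, so it suffices to compare them on the vertex generators. The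
transvection only moves `x`, which `π^x_C` and `π^{y⁻¹}_C` fix; on `z ∈ C` the left side gives
`R_x^{y⁻¹}(x z x⁻¹) = (x y⁻¹) z (x y⁻¹)⁻¹`, which is `π^{y⁻¹}_C (x z x⁻¹)` since `x, y ∉ C`. -/

theorem GP.mulAut_ext {α : Type*} {Γ : SimpleGraph α} {o : α → ℕ} {φ ψ : MulAut (GP Γ o)}
    (h : ∀ v, φ (gen Γ o v) = ψ (gen Γ o v)) : φ = ψ :=
  MulEquiv.toMonoidHom_injective (PresentedGroup.ext h)

theorem IsUnionComponents.notMem_self {α : Type*} {Γ : SimpleGraph α} {v : α} {C : Set α}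
    (hC : IsUnionComponents Γ v C) : v ∉ C := fun hv =>
  (Set.eq_empty_iff_forall_notMem.mp hC.1) v ⟨hv, Set.mem_insert v _⟩

theorem transvection_conjugate_of_partial_conjugation_general (Γ : SimpleGraph V) (o : V → ℕ)
    (x y : V) (C : Set V) (hC : IsUnionComponents Γ x C)
    (hy : y ∉ C ∪ stS Γ x) (ρ ρ' πx πy : MulAut (GP Γ o))
    (hρ : IsTransv Γ o ρ x y 1) (hρ' : IsTransv Γ o ρ' x y (-1))
    (hπx : IsPC Γ o πx x C)
    (hπy : (∀ z ∈ C, πy (gen Γ o z) = (gen Γ o y)⁻¹ * gen Γ o z * gen Γ o y) ∧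
        ∀ z ∉ C, πy (gen Γ o z) = gen Γ o z) :
    ρ' * πx * ρ = πy * πx := by
  have hxC : x ∉ C := hC.notMem_self
  have hyC : y ∉ C := fun h => hy (Or.inl h)
  have hyx : y ≠ x := fun h => hy (Or.inr (h ▸ Set.mem_insert y _))
  refine GP.mulAut_ext fun w => ?_
  simp only [MulAut.mul_apply]
  by_cases hwx : w = x
  · subst w
    rw [hρ.1, zpow_one, map_mul, hπx.2 x hxC, hπx.2 y hyC, map_mul, hρ'.1, hρ'.2 y hyx,
      hπy.2 x hxC, zpow_neg_one, inv_mul_cancel_right]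
  by_cases hwC : w ∈ C
  · rw [hρ.2 w hwx, hπx.1 w hwC, map_mul, map_mul, map_inv, hρ'.1, hρ'.2 w hwx, map_mul,
      map_mul, map_inv, hπy.1 w hwC, hπy.2 x hxC]
    group
  · rw [hρ.2 w hwx, hπx.2 w hwC, hρ'.2 w hwx, hπy.2 w hwC]

/-- If `o(x) = ∞`, `lk(x) ⊆ st(y)` and `C` is a union of components of `Γ \ st(x)` with
`y ∉ C ∪ st(x)`, then `R_x^{y⁻¹} π^x_C R_x^{y} = π^{y⁻¹}_C π^x_C` in `Aut(𝒢)`. -/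
theorem transvection_conjugate_of_partial_conjugation (Γ : SimpleGraph V) (o : V → ℕ)
    (x y : V) (hx : o x = 0) (hle : Γ.neighborSet x ⊆ stS Γ y)
    (C : Set V) (hC : IsUnionComponents Γ x C) (hy : y ∉ C ∪ stS Γ x)
    (ρ ρ' πx πy : MulAut (GP Γ o))
    (hρ : IsTransv Γ o ρ x y 1) (hρ' : IsTransv Γ o ρ' x y (-1))
    (hπx : IsPC Γ o πx x C)
    (hπy : (∀ z ∈ C, πy (gen Γ o z) = (gen Γ o y)⁻¹ * gen Γ o z * gen Γ o y) ∧
        ∀ z ∉ C, πy (gen Γ o z) = gen Γ o z) :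
    ρ' * πx * ρ = πy * πx :=
  transvection_conjugate_of_partial_conjugation_general Γ o x y C hC hy ρ ρ' πx πy hρ hρ' hπx hπy
end

section
/- Let W be a graph product of cyclic groups over a finite labeled graph (Γ, o) in which every vertex has finite order. If K and K' are maximal finite special subgroups (generated by maximal cliques of Γ) and φ is an automorphism of W acting trivially on the abelianization of W with φ(K) = K', then K = K' and φ restricted to K is the identity. -/
variable {V : Type*} [Fintype V]

/-! For a clique `s`, the retraction of `W` onto the special subgroup `W_s`
(killing every generator outside `s`) takes values in the abelian group `W_s`, so it factors
through the abelianization and is therefore invariant under `φ`. Since it is the identity on `W_s`,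
an element of `W_s` is determined by its image in the abelianization. Applied to `φ(K) = K'`, this
forces every generator of `K'` into `K`, so `K' ≤ K` and maximality of `K'` gives equality; then
`φ g` and `g` are elements of `K` with the same image in the abelianization. -/

theorem MonoidHom.eq_of_abelianization_of_eq {G H : Type*} [Group G] [Group H] (f : G →* H)
    (hf : ∀ x y, Commute (f x) (f y)) {a b : G}
    (h : Abelianization.of a = Abelianization.of b) : f a = f b := by
  have hker : commutator G ≤ f.ker := by
    rw [commutator_def, Subgroup.commutator_le]
    intro x _ y _
    rw [MonoidHom.mem_ker, map_commutatorElement, commutatorElement_eq_one_iff_commute]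
    exact hf x y
  have hab : a⁻¹ * b ∈ f.ker := hker (QuotientGroup.eq.mp h)
  rwa [MonoidHom.mem_ker, map_mul, map_inv, inv_mul_eq_one] at hab

section GraphProduct

variable {ι : Type*} (Γ : SimpleGraph ι) (o : ι → ℕ)

theorem gen_pow_eq_one (v : ι) : gen Γ o v ^ o v = 1 := by
  rcases eq_or_ne (o v) 0 with hv | hv
  · rw [hv, pow_zero]
  · have hrel := PresentedGroup.one_of_mem (rels := gpRels Γ o) (Or.inr ⟨v, hv, rfl⟩)
    rwa [map_pow] at hrel

theorem commute_gen_of_adj {u v : ι} (h : Γ.Adj u v) : Commute (gen Γ o u) (gen Γ o v) := by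
  have hrel := PresentedGroup.one_of_mem (rels := gpRels Γ o) (Or.inl ⟨u, v, h, rfl⟩)
  simp only [map_mul, map_inv] at hrel
  rw [Commute, SemiconjBy, ← mul_inv_eq_one, mul_inv_rev]
  simp only [mul_assoc] at hrel ⊢
  exact hrel

variable {Γ o}

def gpLift {G : Type*} [Group G] (f : ι → G) (hcomm : ∀ u v, Γ.Adj u v → Commute (f u) (f v))
    (hpow : ∀ v, f v ^ o v = 1) : GP Γ o →* G :=
  PresentedGroup.toGroup (f := f) <| by
    rintro r (⟨u, v, huv, rfl⟩ | ⟨v, -, rfl⟩)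
    · simp only [map_mul, map_inv, FreeGroup.lift_apply_of, (hcomm u v huv).eq]
      group
    · simpa using hpow v

@[simp]
theorem gpLift_gen {G : Type*} [Group G] (f : ι → G)
    (hcomm : ∀ u v, Γ.Adj u v → Commute (f u) (f v)) (hpow : ∀ v, f v ^ o v = 1) (v : ι) :
    gpLift f hcomm hpow (gen Γ o v) = f v :=
  PresentedGroup.toGroup.of _

theorem gen_ne_one {v : ι} (hv : o v ≠ 1) : gen Γ o v ≠ 1 := by
  have := ZMod.nontrivial_iff.mpr hv
  let f : ι → Multiplicative (ZMod (o v)) := Set.mulIndicator {v} fun _ ↦ .ofAdd 1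
  have hpow : ∀ w, f w ^ o w = 1 := by
    intro w
    rcases eq_or_ne w v with rfl | hw
    · simp [f, ← ofAdd_nsmul]
    · simp [f, hw]
  intro h
  have := congrArg (gpLift f (fun _ _ _ ↦ Commute.all _ _) hpow) h
  simp [f] at this

variable (Γ o)

noncomputable def gpRetraction (s : Set ι) : GP Γ o →* GP Γ o :=
  gpLift (s.mulIndicator (gen Γ o))
    (by
      intro u v huv
      by_cases hu : u ∈ s <;> by_cases hv : v ∈ s <;>
        simp [Set.mulIndicator_of_mem, Set.mulIndicator_of_notMem, hu, hv,
          commute_gen_of_adj Γ o huv])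
    (by
      intro v
      by_cases hv : v ∈ s <;> simp [hv, gen_pow_eq_one])

variable {Γ o}

theorem gpRetraction_gen (s : Set ι) (v : ι) :
    gpRetraction Γ o s (gen Γ o v) = s.mulIndicator (gen Γ o) v :=
  gpLift_gen _ _ _ v

theorem gpRetraction_mem_closure (s : Set ι) (g : GP Γ o) :
    gpRetraction Γ o s g ∈ Subgroup.closure (gen Γ o '' s) := by
  refine PresentedGroup.generated_by _ ((Subgroup.closure (gen Γ o '' s)).comap _) ?_ g
  intro v
  change gpRetraction Γ o s (gen Γ o v) ∈ Subgroup.closure (gen Γ o '' s)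
  rw [gpRetraction_gen]
  by_cases hv : v ∈ s
  · rw [Set.mulIndicator_of_mem hv]
    exact Subgroup.subset_closure ⟨v, hv, rfl⟩
  · rw [Set.mulIndicator_of_notMem hv]
    exact one_mem _

theorem gpRetraction_eq_self_of_mem_closure {s : Set ι} {g : GP Γ o}
    (hg : g ∈ Subgroup.closure (gen Γ o '' s)) :
    gpRetraction Γ o s g = g := by
  refine MonoidHom.eqOn_closure (g := MonoidHom.id _) ?_ hg
  rintro _ ⟨v, hv, rfl⟩
  rw [gpRetraction_gen, Set.mulIndicator_of_mem hv, MonoidHom.id_apply]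

theorem isMulCommutative_closure_gen_of_isClique {s : Set ι} (hs : Γ.IsClique s) :
    IsMulCommutative (Subgroup.closure (gen Γ o '' s)) := by
  apply Subgroup.isMulCommutative_closure
  rintro _ ⟨u, hu, rfl⟩ _ ⟨v, hv, rfl⟩
  rcases eq_or_ne u v with rfl | huv
  · rfl
  · exact commute_gen_of_adj Γ o (hs hu hv huv)

theorem commute_gpRetraction {s : Set ι} (hs : Γ.IsClique s) (x y : GP Γ o) :
    Commute (gpRetraction Γ o s x) (gpRetraction Γ o s y) := by
  have hK := Subgroup.le_centralizer_iff_isMulCommutative.mpr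
    (isMulCommutative_closure_gen_of_isClique hs) (gpRetraction_mem_closure s y)
  exact Subgroup.mem_centralizer_iff.mp hK _ (gpRetraction_mem_closure s x)

theorem gpRetraction_eq_of_abelianization_of_eq {s : Set ι} (hs : Γ.IsClique s) {a b : GP Γ o}
    (h : Abelianization.of a = Abelianization.of b) : gpRetraction Γ o s a = gpRetraction Γ o s b :=
  (gpRetraction Γ o s).eq_of_abelianization_of_eq (commute_gpRetraction hs) h

end GraphProduct

theorem IA_fixes_maximal_finite_special_subgroups_general (Γ : SimpleGraph V) (o : V → ℕ)
    (ho : ∀ v : V, IsPrimePow (o v))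
    (s t : Set V)
    (hs : Γ.IsClique s)
    (htmax : ∀ t' : Set V, Γ.IsClique t' → t ⊆ t' → t' = t)
    (φ : MulAut (GP Γ o))
    (hab : ∀ g : GP Γ o, Abelianization.of (φ g) = Abelianization.of g)
    (hmap : (Subgroup.closure (gen Γ o '' s)).map φ.toMonoidHom
        = Subgroup.closure (gen Γ o '' t)) :
    Subgroup.closure (gen Γ o '' s) = Subgroup.closure (gen Γ o '' t) ∧
    ∀ g ∈ Subgroup.closure (gen Γ o '' s), φ g = g := by
  have hφ : ∀ g, gpRetraction Γ o s (φ g) = gpRetraction Γ o s g := fun g ↦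
    gpRetraction_eq_of_abelianization_of_eq hs (hab g)
  have hts : t ⊆ s := by
    intro v hv
    by_contra hvs
    obtain ⟨g, hg, hgv⟩ : gen Γ o v ∈ (Subgroup.closure (gen Γ o '' s)).map φ.toMonoidHom :=
      hmap ▸ Subgroup.subset_closure ⟨v, hv, rfl⟩
    have hg1 : g = 1 := by
      rw [← gpRetraction_eq_self_of_mem_closure hg, ← hφ, ← MulEquiv.coe_toMonoidHom, hgv,
        gpRetraction_gen, Set.mulIndicator_of_notMem hvs]
    refine gen_ne_one (Γ := Γ) (ho v).one_lt.ne' ?_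
    rw [← hgv, hg1, map_one]
  obtain rfl : s = t := htmax s hs hts
  refine ⟨rfl, fun g hg ↦ ?_⟩
  have hφg : φ g ∈ Subgroup.closure (gen Γ o '' s) := hmap ▸ Subgroup.mem_map_of_mem _ hg
  rw [← gpRetraction_eq_self_of_mem_closure hφg, hφ, gpRetraction_eq_self_of_mem_closure hg]

/-- In a graph product of finite cyclic groups of prime-power order, if `K, K'` are maximal
finite special subgroups (generated by maximal cliques) and `φ` is an automorphism acting
trivially on the abelianization with `φ(K) = K'`, then `K = K'` and `φ` restricts to the
identity on `K`. -/
theorem IA_fixes_maximal_finite_special_subgroups (Γ : SimpleGraph V) (o : V → ℕ)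
    (ho : ∀ v : V, IsPrimePow (o v))
    (s t : Set V)
    (hs : Γ.IsClique s) (hsmax : ∀ s' : Set V, Γ.IsClique s' → s ⊆ s' → s' = s)
    (ht : Γ.IsClique t) (htmax : ∀ t' : Set V, Γ.IsClique t' → t ⊆ t' → t' = t)
    (φ : MulAut (GP Γ o))
    (hab : ∀ g : GP Γ o, Abelianization.of (φ g) = Abelianization.of g)
    (hmap : (Subgroup.closure (gen Γ o '' s)).map φ.toMonoidHom
        = Subgroup.closure (gen Γ o '' t)) :
    Subgroup.closure (gen Γ o '' s) = Subgroup.closure (gen Γ o '' t) ∧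
    ∀ g ∈ Subgroup.closure (gen Γ o '' s), φ g = g :=
  IA_fixes_maximal_finite_special_subgroups_general Γ o ho s t hs htmax φ hab hmap
end

section
/- Let 𝒢 be a graph product of cyclic groups and let α = π^a_C and β = π^b_D be partial conjugations (a ≠ b or C ≠ D). If a = b and C ∩ D = ∅, or if ({a} ∪ C) ∩ ({b} ∪ D) = ∅, or if a and b commute (ab = ba in 𝒢) and C = D, then α and β commute in Aut(𝒢). -/
variable {V : Type*} [Fintype V]

/-! Automorphisms of the graph product are determined by the images of the vertex generators.
When neither multiplier lies in the other's support, `π^a_C` fixes `b` and `π^b_D` fixes `a`, so the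
two composites agree on every generator outside `C ∩ D`, and on a generator in `C ∩ D` they
conjugate it by `ab` and by `ba` respectively. -/

theorem PresentedGroup.mulEquiv_ext {α G : Type*} [Group G] {rels : Set (FreeGroup α)}
    {φ ψ : PresentedGroup rels ≃* G} (h : ∀ x, φ (.of x) = ψ (.of x)) : φ = ψ :=
  MulEquiv.toMonoidHom_injective (PresentedGroup.ext h)

section GraphProduct

variable {V : Type*} {Γ : SimpleGraph V} {o : V → ℕ}

theorem gen_commute_of_adj {u v : V} (h : Γ.Adj u v) : Commute (gen Γ o u) (gen Γ o v) :=
  commutatorElement_eq_one_iff_commute.mp (PresentedGroup.one_of_mem (Or.inl ⟨u, v, h, rfl⟩))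

theorem gen_commute_of_adj_or_eq {u v : V} (h : Γ.Adj u v ∨ u = v) :
    Commute (gen Γ o u) (gen Γ o v) := by
  rcases h with h | rfl
  exacts [gen_commute_of_adj h, Commute.refl _]

theorem mem_stS_of_adj_or_eq {v w : V} (h : Γ.Adj v w ∨ v = w) : w ∈ stS Γ v := by
  rcases h with h | rfl
  exacts [Set.mem_insert_of_mem v h, Set.mem_insert v _]

theorem IsUnionComponents.notMem_of_mem_stS {v w : V} {C : Set V}
    (hC : IsUnionComponents Γ v C) (hw : w ∈ stS Γ v) : w ∉ C :=
  fun hwC => (Set.eq_empty_iff_forall_notMem.mp hC.1) w ⟨hwC, hw⟩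

theorem IsUnionComponents.notMem {v : V} {C : Set V} (hC : IsUnionComponents Γ v C) : v ∉ C :=
  hC.notMem_of_mem_stS (Set.mem_insert v _)

theorem IsPC.commute {α β : MulAut (GP Γ o)} {a b : V} {C D : Set V}
    (hα : IsPC Γ o α a C) (hβ : IsPC Γ o β b D) (haD : a ∉ D) (hbC : b ∉ C)
    (hab : (C ∩ D).Nonempty → Commute (gen Γ o a) (gen Γ o b)) : Commute α β := by
  refine PresentedGroup.mulEquiv_ext fun z => ?_
  change α (β (gen Γ o z)) = β (α (gen Γ o z))
  by_cases hzC : z ∈ C <;> by_cases hzD : z ∈ D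
  · have hcomm := hab ⟨z, hzC, hzD⟩
    simp only [hβ.1 z hzD, hα.1 z hzC, map_mul, map_inv, hα.2 b hbC, hβ.2 a haD]
    set x := gen Γ o a
    set y := gen Γ o b
    calc y * (x * gen Γ o z * x⁻¹) * y⁻¹ = y * x * gen Γ o z * (y * x)⁻¹ := by group
      _ = x * y * gen Γ o z * (x * y)⁻¹ := by rw [hcomm.eq]
      _ = x * (y * gen Γ o z * y⁻¹) * x⁻¹ := by group
  · simp only [hβ.2 z hzD, hα.1 z hzC, map_mul, map_inv, hβ.2 a haD]
  · simp only [hα.2 z hzC, hβ.1 z hzD, map_mul, map_inv, hα.2 b hbC]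
  · rw [hα.2 z hzC, hβ.2 z hzD, hα.2 z hzC]

end GraphProduct

theorem partial_conjugations_commute_criteria_general (Γ : SimpleGraph V) (o : V → ℕ)
    (a b : V) (C D : Set V)
    (hC : IsUnionComponents Γ a C) (hD : IsUnionComponents Γ b D)
    (α β : MulAut (GP Γ o))
    (hα : IsPC Γ o α a C) (hβ : IsPC Γ o β b D)
    (hcases : (a = b ∧ C ∩ D = ∅) ∨
        ((insert a C) ∩ (insert b D) = ∅) ∨
        ((Γ.Adj a b ∨ a = b) ∧ C = D)) :
    α * β = β * α := by
  refine Commute.eq ?_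
  rcases hcases with ⟨rfl, -⟩ | hdisj | ⟨hadj, rfl⟩
  · exact hα.commute hβ hD.notMem hC.notMem fun _ => Commute.refl _
  · have hsub : insert a C ∩ insert b D ⊆ ∅ := hdisj.subset
    refine hα.commute hβ (fun haD => hsub ⟨Set.mem_insert a C, Set.mem_insert_of_mem b haD⟩)
      (fun hbC => hsub ⟨Set.mem_insert_of_mem a hbC, Set.mem_insert b D⟩)
      fun ⟨z, hzC, hzD⟩ => (hsub ⟨Set.mem_insert_of_mem a hzC, Set.mem_insert_of_mem b hzD⟩).elim
  · exact hα.commute hβ (hD.notMem_of_mem_stS (mem_stS_of_adj_or_eq (hadj.imp .symm .symm)))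
      (hC.notMem_of_mem_stS (mem_stS_of_adj_or_eq hadj)) fun _ => gen_commute_of_adj_or_eq hadj

/-- Sufficient criteria for two partial conjugations `π^a_C` and `π^b_D` to commute in
`Aut(𝒢)`: `a = b` with `C ∩ D = ∅`, or `({a} ∪ C) ∩ ({b} ∪ D) = ∅`, or `a` and `b` commute in
`𝒢` (they are adjacent or equal) with `C = D`. -/
theorem partial_conjugations_commute_criteria (Γ : SimpleGraph V) (o : V → ℕ)
    (a b : V) (C D : Set V)
    (hC : IsUnionComponents Γ a C) (hD : IsUnionComponents Γ b D)
    (α β : MulAut (GP Γ o))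
    (hα : IsPC Γ o α a C) (hβ : IsPC Γ o β b D)
    (hne : a ≠ b ∨ C ≠ D)
    (hcases : (a = b ∧ C ∩ D = ∅) ∨
        ((insert a C) ∩ (insert b D) = ∅) ∨
        ((Γ.Adj a b ∨ a = b) ∧ C = D)) :
    α * β = β * α :=
  partial_conjugations_commute_criteria_general Γ o a b C D hC hD α β hα hβ hcases
end
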